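/- arXiv:1912.10600 — 3 statements merged into one kernel-verified Lean document; each statement's English description precedes it below -/
import Mathlib

section
/- Policy improvement: if T_{π'} v^π ≥ v^π componentwise (in particular if π' is greedy w.r.t. v^π), then v^{π'} ≥ v^π componentwise. -/
/-!
A monotone operator `T` on `ι → ℝ` that shifts constant vectors by the factor `γ < 1` obeys a
comparison principle: if `v ≤ T v` and `T w = w`, put `d = maxₛ (v s - w s)`; then
`v ≤ T v ≤ T (w + d) = w + γ d`, so `d ≤ γ d`, i.e. `d ≤ 0`. The Bellman operator of a policy is
monotone and shifts constants by `γ` because the policy and the transition kernel are stochastic.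
-/

open Finset Function

theorem le_of_le_map_of_isFixedPt {ι : Type*} [Finite ι] {T : (ι → ℝ) → ι → ℝ} {γ : ℝ}
    (hγ : γ < 1) (hT : Monotone T) (hT_add_const : ∀ u c, T (u + const ι c) = T u + const ι (γ * c))
    {v w : ι → ℝ} (hv : v ≤ T v) (hw : IsFixedPt T w) : v ≤ w := by
  intro s
  have : Nonempty ι := ⟨s⟩
  obtain ⟨s₀, hs₀⟩ := Finite.exists_max fun t => v t - w t
  set d := v s₀ - w s₀
  have hvw : v ≤ w + const ι d := fun t => by
    simp only [Pi.add_apply, const_apply]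
    linarith [hs₀ t]
  have hshift : v ≤ w + const ι (γ * d) :=
    calc v ≤ T v := hv
      _ ≤ T (w + const ι d) := hT hvw
      _ = w + const ι (γ * d) := by rw [hT_add_const, hw]
  have hd : d ≤ γ * d := by
    have := hshift s₀
    simp only [Pi.add_apply, const_apply] at this
    linarith
  have hd_nonpos : d ≤ 0 := by nlinarith
  linarith [hs₀ s]

section Bellman

variable {σ A : Type*} [Fintype σ] [Fintype A]

def policyBellman (r : σ → A → ℝ) (p : σ → A → σ → ℝ) (γ : ℝ) (π : σ → A → ℝ) :
    (σ → ℝ) → σ → ℝ :=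
  fun v s => ∑ a, π s a * (r s a + γ * ∑ s', p s a s' * v s')

theorem policyBellman_monotone (r : σ → A → ℝ) {p : σ → A → σ → ℝ} {γ : ℝ} {π : σ → A → ℝ}
    (hp : ∀ s a s', 0 ≤ p s a s') (hγ : 0 ≤ γ) (hπ : ∀ s a, 0 ≤ π s a) :
    Monotone (policyBellman r p γ π) := by
  intro u v huv s
  unfold policyBellman
  gcongr with a _ s' _
  · exact hπ s a
  · exact hp s a s'
  · exact huv s'

theorem policyBellman_add_const (r : σ → A → ℝ) {p : σ → A → σ → ℝ} (γ : ℝ) {π : σ → A → ℝ}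
    (hp : ∀ s a, ∑ s', p s a s' = 1) (hπ : ∀ s, ∑ a, π s a = 1) (v : σ → ℝ) (c : ℝ) :
    policyBellman r p γ π (v + const σ c) = policyBellman r p γ π v + const σ (γ * c) := by
  ext s
  have hpc : ∀ a, ∑ s', p s a s' * (v s' + c) = ∑ s', p s a s' * v s' + c := fun a => by
    simp only [mul_add, sum_add_distrib, ← sum_mul, hp, one_mul]
  have hπc : ∑ a, π s a * (γ * c) = γ * c := by rw [← sum_mul, hπ, one_mul]
  simp only [policyBellman, Pi.add_apply, const_apply, hpc]
  rw [← hπc, ← sum_add_distrib]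
  exact sum_congr rfl fun a _ => by ring

end Bellman

theorem policy_improvement_general
    {n : ℕ} {A : Type*} [Fintype A]
    (r : Fin n → A → ℝ) (p : Fin n → A → Fin n → ℝ)
    (hp_nonneg : ∀ s a s', 0 ≤ p s a s') (hp_sum : ∀ s a, ∑ s', p s a s' = 1)
    (γ : ℝ) (hγ0 : 0 ≤ γ) (hγ1 : γ < 1)
    (π' : Fin n → A → ℝ)
    (hπ'_nonneg : ∀ s a, 0 ≤ π' s a) (hπ'_sum : ∀ s, ∑ a, π' s a = 1)
    (Tπ' : (Fin n → ℝ) → (Fin n → ℝ))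
    (hTπ' : ∀ v s, Tπ' v s = ∑ a, π' s a * (r s a + γ * ∑ s', p s a s' * v s'))
    (vπ : Fin n → ℝ)
    (vπ' : Fin n → ℝ) (hvπ' : Tπ' vπ' = vπ')
    (himp : ∀ s, vπ s ≤ Tπ' vπ s) :
    ∀ s, vπ s ≤ vπ' s := by
  obtain rfl : Tπ' = policyBellman r p γ π' := funext fun v => funext (hTπ' v)
  exact le_of_le_map_of_isFixedPt hγ1 (policyBellman_monotone r hp_nonneg hγ0 hπ'_nonneg)
    (policyBellman_add_const r γ hp_sum hπ'_sum) himp hvπ'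

/-- Policy improvement: if `T_{π'} v^π ≥ v^π` componentwise (in particular
if `π'` is greedy w.r.t. `v^π`), then `v^{π'} ≥ v^π` componentwise, where `v^π`, `v^{π'}`
are the (unique) fixed points of `T_π`, `T_{π'}`. -/
theorem policy_improvement
    {n : ℕ} {A : Type*} [Fintype A] [Nonempty A]
    (r : Fin n → A → ℝ) (p : Fin n → A → Fin n → ℝ)
    (hp_nonneg : ∀ s a s', 0 ≤ p s a s') (hp_sum : ∀ s a, ∑ s', p s a s' = 1)
    (γ : ℝ) (hγ0 : 0 ≤ γ) (hγ1 : γ < 1)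
    (π π' : Fin n → A → ℝ)
    (hπ_nonneg : ∀ s a, 0 ≤ π s a) (hπ_sum : ∀ s, ∑ a, π s a = 1)
    (hπ'_nonneg : ∀ s a, 0 ≤ π' s a) (hπ'_sum : ∀ s, ∑ a, π' s a = 1)
    (Tπ Tπ' : (Fin n → ℝ) → (Fin n → ℝ))
    (hTπ : ∀ v s, Tπ v s = ∑ a, π s a * (r s a + γ * ∑ s', p s a s' * v s'))
    (hTπ' : ∀ v s, Tπ' v s = ∑ a, π' s a * (r s a + γ * ∑ s', p s a s' * v s'))
    (vπ : Fin n → ℝ) (hvπ : Tπ vπ = vπ)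
    (vπ' : Fin n → ℝ) (hvπ' : Tπ' vπ' = vπ')
    (himp : ∀ s, vπ s ≤ Tπ' vπ s) :
    ∀ s, vπ s ≤ vπ' s :=
  policy_improvement_general r p hp_nonneg hp_sum γ hγ0 hγ1 π' hπ'_nonneg hπ'_sum Tπ' hTπ' vπ vπ'
    hvπ' himp
end

section
/- Error bound for approximate policy iteration: let (π_k) be a sequence of policies and (V_k) approximate value vectors satisfying ‖V_k − v^{π_k}‖_∞ ≤ ε and ‖T_{π_{k+1}} V_k − T_* V_k‖_∞ ≤ δ for all k. Then limsup_{k→∞} ‖v^{π_k} − v*‖_∞ ≤ (δ + 2γε)/(1−γ)². -/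
/-!
Both `T_π` (for a stochastic policy `π`) and `T_*` are monotone and satisfy `F (v + c) ≤ F v + γ c`
for constants `c`. Put `ζ = δ + 2γε`. Evaluating the approximate greedy step at `v^{π_k}` instead of
`V_k` costs `2γε`, so `T_* v^{π_k} ≤ T_{π_{k+1}} v^{π_k} + ζ`. Comparing fixed points then gives
`v^{π_k} ≤ v^{π_{k+1}} + ζ/(1-γ)` and `v^{π_k} ≤ v*`, hence
`‖v^{π_{k+1}} - v*‖ ≤ γ ‖v^{π_k} - v*‖ + ζ/(1-γ)`, and a nonnegative sequence with
`e_{k+1} ≤ γ e_k + b` has limsup at most `b/(1-γ)`.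
-/

open Filter Topology Finset

lemma limsup_le_div_of_le_mul_add {e : ℕ → ℝ} {γ b : ℝ} (he : ∀ k, 0 ≤ e k) (hγ0 : 0 ≤ γ)
    (hγ1 : γ < 1) (h : ∀ k, e (k + 1) ≤ γ * e k + b) :
    limsup e atTop ≤ b / (1 - γ) := by
  have hR : γ * (b / (1 - γ)) + b = b / (1 - γ) := by field_simp [(sub_pos.2 hγ1).ne']; ring
  set R := b / (1 - γ)
  have hbound : ∀ k, e k ≤ R + γ ^ k * (e 0 - R) := by
    intro k
    induction k with
    | zero => simp
    | succ k ih =>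
      calc e (k + 1) ≤ γ * (R + γ ^ k * (e 0 - R)) + b :=
            (h k).trans (add_le_add_left (mul_le_mul_of_nonneg_left ih hγ0) b)
        _ = R + γ ^ (k + 1) * (e 0 - R) := by linear_combination hR
  have hlim : Tendsto (fun k => R + γ ^ k * (e 0 - R)) atTop (𝓝 R) := by
    simpa using tendsto_const_nhds.add
      ((tendsto_pow_atTop_nhds_zero_of_lt_one hγ0 hγ1).mul_const (e 0 - R))
  calc limsup e atTop ≤ limsup (fun k => R + γ ^ k * (e 0 - R)) atTop :=
        limsup_le_limsup (Eventually.of_forall hbound) (isCoboundedUnder_le_of_le atTop he)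
          hlim.isBoundedUnder_le
    _ = R := hlim.limsup_eq

lemma le_add_of_norm_sub_le {ι : Type*} [Fintype ι] {u v : ι → ℝ} {c : ℝ} (h : ‖u - v‖ ≤ c)
    (s : ι) : u s ≤ v s + c := by
  have := (Real.le_norm_self _).trans ((norm_le_pi_norm (u - v) s).trans h)
  rw [Pi.sub_apply] at this
  linarith

lemma sum_mul_le_sum_mul_add {α : Type*} [Fintype α] {q f g : α → ℝ} {c : ℝ}
    (hq0 : ∀ a, 0 ≤ q a) (hq1 : ∑ a, q a = 1) (h : ∀ a, f a ≤ g a + c) :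
    ∑ a, q a * f a ≤ ∑ a, q a * g a + c :=
  calc ∑ a, q a * f a ≤ ∑ a, q a * (g a + c) :=
        sum_le_sum fun a _ => mul_le_mul_of_nonneg_left (h a) (hq0 a)
    _ = ∑ a, q a * g a + c := by simp only [mul_add, sum_add_distrib, ← sum_mul, hq1, one_mul]

lemma sum_mul_le_sup' {α : Type*} [Fintype α] [Nonempty α] {q f : α → ℝ}
    (hq0 : ∀ a, 0 ≤ q a) (hq1 : ∑ a, q a = 1) :
    ∑ a, q a * f a ≤ univ.sup' univ_nonempty f := by
  have := sum_mul_le_sum_mul_add hq0 hq1 (f := f) (g := fun _ => univ.sup' univ_nonempty f)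
    (c := 0) fun a => (le_sup' f (mem_univ a)).trans_eq (add_zero _).symm
  rwa [← sum_mul, hq1, one_mul, add_zero] at this

/-- Monotonicity and the discounting bound `F (v + c) ≤ F v + γ c`, in one statement. -/
def DiscountedMonotone {ι : Type*} (γ : ℝ) (F : (ι → ℝ) → ι → ℝ) : Prop :=
  ∀ ⦃u v : ι → ℝ⦄ ⦃c : ℝ⦄, (∀ s, u s ≤ v s + c) → ∀ s, F u s ≤ F v s + γ * c

namespace DiscountedMonotone

variable {ι : Type*} {γ : ℝ}

lemma of_stochastic [Fintype ι] {r : ι → ℝ} {P : ι → ι → ℝ} (hP0 : ∀ s s', 0 ≤ P s s')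
    (hP1 : ∀ s, ∑ s', P s s' = 1) (hγ0 : 0 ≤ γ) :
    DiscountedMonotone γ fun v s => r s + γ * ∑ s', P s s' * v s' := by
  intro u v c h s
  have := mul_le_mul_of_nonneg_left (sum_mul_le_sum_mul_add (hP0 s) (hP1 s) h) hγ0
  linarith

lemma sum_mul {A : Type*} [Fintype A] {F : A → (ι → ℝ) → ι → ℝ}
    (hF : ∀ a, DiscountedMonotone γ (F a)) {μ : ι → A → ℝ} (hμ0 : ∀ s a, 0 ≤ μ s a)
    (hμ1 : ∀ s, ∑ a, μ s a = 1) :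
    DiscountedMonotone γ fun v s => ∑ a, μ s a * F a v s :=
  fun _ _ _ h s => sum_mul_le_sum_mul_add (hμ0 s) (hμ1 s) fun a => hF a h s

lemma sup' {A : Type*} [Fintype A] [Nonempty A] {F : A → (ι → ℝ) → ι → ℝ}
    (hF : ∀ a, DiscountedMonotone γ (F a)) :
    DiscountedMonotone γ fun v s => univ.sup' univ_nonempty fun a => F a v s :=
  fun _ v _ h s => sup'_le _ _ fun a _ =>
    (hF a h s).trans (add_le_add_left (le_sup' (fun a => F a v s) (mem_univ a)) _)

variable {F G : (ι → ℝ) → ι → ℝ}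

lemma le_add_of_norm_sub_le [Fintype ι] (hF : DiscountedMonotone γ F) {u v : ι → ℝ} {c : ℝ}
    (h : ‖u - v‖ ≤ c) (s : ι) : F u s ≤ F v s + γ * c :=
  hF (_root_.le_add_of_norm_sub_le h) s

lemma le_fixedPoint_add [Finite ι] (hF : DiscountedMonotone γ F) (hγ1 : γ < 1) {u w : ι → ℝ}
    {b : ℝ} (hw : F w = w) (hu : ∀ s, u s ≤ F u s + b) (s : ι) : u s ≤ w s + b / (1 - γ) := by
  rcases isEmpty_or_nonempty ι with hι | hι
  · exact isEmptyElim s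
  obtain ⟨s₀, hs₀⟩ := Finite.exists_max fun s => u s - w s
  set m := u s₀ - w s₀
  have hm : m ≤ γ * m + b := by
    have := hF (u := u) (v := w) (c := m) (fun s => by linarith [hs₀ s]) s₀
    rw [hw] at this
    linarith [hu s₀]
  have : m ≤ b / (1 - γ) := by rw [le_div_iff₀ (by linarith)]; linarith
  linarith [hs₀ s]

lemma le_add_of_approx_greedy [Fintype ι] (hF : DiscountedMonotone γ F)
    (hG : DiscountedMonotone γ G) {u V : ι → ℝ} {ε δ : ℝ} (hV : ‖V - u‖ ≤ ε)
    (hgreedy : ‖F V - G V‖ ≤ δ) (s : ι) : G u s ≤ F u s + (δ + 2 * γ * ε) := by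
  have h₁ := hG.le_add_of_norm_sub_le ((norm_sub_rev u V).trans_le hV) s
  have h₂ := _root_.le_add_of_norm_sub_le ((norm_sub_rev (G V) (F V)).trans_le hgreedy) s
  have h₃ := hF.le_add_of_norm_sub_le hV s
  linarith

lemma norm_sub_fixedPoint_le [Fintype ι] (hF : DiscountedMonotone γ F)
    (hG : DiscountedMonotone γ G) (hγ0 : 0 ≤ γ) (hγ1 : γ < 1) {v₀ v₁ vstar : ι → ℝ} {ζ : ℝ}
    (hζ : 0 ≤ ζ) (hv₁ : F v₁ = v₁) (hvstar : G vstar = vstar) (hFG : ∀ s, F v₁ s ≤ G v₁ s)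
    (hv₀ : ∀ s, v₀ s ≤ G v₀ s) (hgreedy : ∀ s, G v₀ s ≤ F v₀ s + ζ) :
    ‖v₁ - vstar‖ ≤ γ * ‖v₀ - vstar‖ + ζ / (1 - γ) := by
  have hopt : ∀ s, v₁ s ≤ vstar s := by
    simpa using hG.le_fixedPoint_add hγ1 hvstar (b := 0) fun s => by simpa [hv₁] using hFG s
  have himp := hF.le_fixedPoint_add hγ1 hv₁ fun s => (hv₀ s).trans (hgreedy s)
  refine (pi_norm_le_iff_of_nonneg (add_nonneg (mul_nonneg hγ0 (norm_nonneg _))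
    (div_nonneg hζ (sub_nonneg.2 hγ1.le)))).2 fun s => ?_
  rw [Real.norm_eq_abs, Pi.sub_apply, abs_sub_comm, abs_of_nonneg (sub_nonneg.2 (hopt s))]
  have h₁ := hG.le_add_of_norm_sub_le (norm_sub_rev vstar v₀).le s
  have h₂ := hF himp s
  have hζγ : ζ + γ * (ζ / (1 - γ)) = ζ / (1 - γ) := by
    field_simp [(sub_pos.2 hγ1).ne']; ring
  linarith [congrFun hvstar s, congrFun hv₁ s, hgreedy s]

end DiscountedMonotone

theorem limsup_norm_sub_le_of_approximate_policy_iteration {ι : Type*} [Fintype ι] {γ ε δ : ℝ}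
    (hγ0 : 0 ≤ γ) (hγ1 : γ < 1) {F : ℕ → (ι → ℝ) → ι → ℝ} {G : (ι → ℝ) → ι → ℝ}
    (hF : ∀ k, DiscountedMonotone γ (F k)) (hG : DiscountedMonotone γ G)
    (hFG : ∀ k v s, F k v s ≤ G v s) {v : ℕ → ι → ℝ} (hv : ∀ k, F k (v k) = v k)
    {vstar : ι → ℝ} (hvstar : G vstar = vstar) {V : ℕ → ι → ℝ}
    (hpev : ∀ k, ‖V k - v k‖ ≤ ε) (hpim : ∀ k, ‖F (k + 1) (V k) - G (V k)‖ ≤ δ) :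
    limsup (fun k => ‖v k - vstar‖) atTop ≤ (δ + 2 * γ * ε) / (1 - γ) ^ 2 := by
  have hε : 0 ≤ ε := (norm_nonneg _).trans (hpev 0)
  have hδ : 0 ≤ δ := (norm_nonneg _).trans (hpim 0)
  have hstep (k : ℕ) :
      ‖v (k + 1) - vstar‖ ≤ γ * ‖v k - vstar‖ + (δ + 2 * γ * ε) / (1 - γ) :=
    (hF (k + 1)).norm_sub_fixedPoint_le hG hγ0 hγ1 (by positivity) (hv (k + 1)) hvstar
      (hFG _ _) (fun s => (congrFun (hv k) s).symm.trans_le (hFG k (v k) s))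
      ((hF (k + 1)).le_add_of_approx_greedy hG (hpev k) (hpim k))
  calc limsup (fun k => ‖v k - vstar‖) atTop ≤ (δ + 2 * γ * ε) / (1 - γ) / (1 - γ) :=
        limsup_le_div_of_le_mul_add (fun k => norm_nonneg _) hγ0 hγ1 hstep
    _ = (δ + 2 * γ * ε) / (1 - γ) ^ 2 := by rw [div_div, sq]

theorem approximate_policy_iteration_error_bound_general
    {n : ℕ} {A : Type*} [Fintype A] [Nonempty A]
    (r : Fin n → A → ℝ) (p : Fin n → A → Fin n → ℝ)
    (hp_nonneg : ∀ s a s', 0 ≤ p s a s') (hp_sum : ∀ s a, ∑ s', p s a s' = 1)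
    (γ : ℝ) (hγ0 : 0 ≤ γ) (hγ1 : γ < 1)
    (π : ℕ → Fin n → A → ℝ)
    (hπ_nonneg : ∀ k s a, 0 ≤ π k s a) (hπ_sum : ∀ k s, ∑ a, π k s a = 1)
    (T : (Fin n → A → ℝ) → (Fin n → ℝ) → (Fin n → ℝ))
    (hT : ∀ μ v s, T μ v s = ∑ a, μ s a * (r s a + γ * ∑ s', p s a s' * v s'))
    (Tstar : (Fin n → ℝ) → (Fin n → ℝ))
    (hTstar : ∀ v s, Tstar v s =
      Finset.univ.sup' Finset.univ_nonempty (fun a : A => r s a + γ * ∑ s', p s a s' * v s'))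
    (vπ : ℕ → Fin n → ℝ) (hvπ : ∀ k, T (π k) (vπ k) = vπ k)
    (vstar : Fin n → ℝ) (hvstar : Tstar vstar = vstar)
    (ε δ : ℝ)
    (V : ℕ → Fin n → ℝ)
    (hpev : ∀ k, ‖V k - vπ k‖ ≤ ε)
    (hpim : ∀ k, ‖T (π (k + 1)) (V k) - Tstar (V k)‖ ≤ δ) :
    Filter.limsup (fun k => ‖vπ k - vstar‖) atTop ≤ (δ + 2 * γ * ε) / (1 - γ) ^ 2 := by
  have hQ (a : A) : DiscountedMonotone γ fun v s => r s a + γ * ∑ s', p s a s' * v s' :=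
    .of_stochastic (fun s => hp_nonneg s a) (fun s => hp_sum s a) hγ0
  have hT' : ∀ k, DiscountedMonotone γ (T (π k)) := fun k => by
    rw [show T (π k) = _ from funext₂ (hT (π k))]
    exact .sum_mul hQ (hπ_nonneg k) (hπ_sum k)
  have hTstar' : DiscountedMonotone γ Tstar := by
    rw [show Tstar = _ from funext₂ hTstar]
    exact .sup' hQ
  have hTle (k : ℕ) (v : Fin n → ℝ) (s : Fin n) : T (π k) v s ≤ Tstar v s := by
    rw [hT, hTstar]
    exact sum_mul_le_sup' (hπ_nonneg k s) (hπ_sum k s)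
  exact limsup_norm_sub_le_of_approximate_policy_iteration hγ0 hγ1 hT' hTstar' hTle hvπ hvstar
    hpev hpim

/-- Error bound for approximate policy iteration: let `(π_k)` be a sequence
of policies and `(V_k)` approximate value vectors with `‖V_k − v^{π_k}‖_∞ ≤ ε` and
`‖T_{π_{k+1}} V_k − T_* V_k‖_∞ ≤ δ` for all `k`. Then
`limsup_{k→∞} ‖v^{π_k} − v*‖_∞ ≤ (δ + 2γε)/(1−γ)²`. -/
theorem approximate_policy_iteration_error_bound
    {n : ℕ} {A : Type*} [Fintype A] [Nonempty A]
    (r : Fin n → A → ℝ) (p : Fin n → A → Fin n → ℝ)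
    (hp_nonneg : ∀ s a s', 0 ≤ p s a s') (hp_sum : ∀ s a, ∑ s', p s a s' = 1)
    (γ : ℝ) (hγ0 : 0 ≤ γ) (hγ1 : γ < 1)
    (π : ℕ → Fin n → A → ℝ)
    (hπ_nonneg : ∀ k s a, 0 ≤ π k s a) (hπ_sum : ∀ k s, ∑ a, π k s a = 1)
    (T : (Fin n → A → ℝ) → (Fin n → ℝ) → (Fin n → ℝ))
    (hT : ∀ μ v s, T μ v s = ∑ a, μ s a * (r s a + γ * ∑ s', p s a s' * v s'))
    (Tstar : (Fin n → ℝ) → (Fin n → ℝ))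
    (hTstar : ∀ v s, Tstar v s =
      Finset.univ.sup' Finset.univ_nonempty (fun a : A => r s a + γ * ∑ s', p s a s' * v s'))
    (vπ : ℕ → Fin n → ℝ) (hvπ : ∀ k, T (π k) (vπ k) = vπ k)
    (vstar : Fin n → ℝ) (hvstar : Tstar vstar = vstar)
    (ε δ : ℝ) (hε : 0 ≤ ε) (hδ : 0 ≤ δ)
    (V : ℕ → Fin n → ℝ)
    (hpev : ∀ k, ‖V k - vπ k‖ ≤ ε)
    (hpim : ∀ k, ‖T (π (k + 1)) (V k) - Tstar (V k)‖ ≤ δ) :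
    Filter.limsup (fun k => ‖vπ k - vstar‖) atTop ≤ (δ + 2 * γ * ε) / (1 - γ) ^ 2 :=
  approximate_policy_iteration_error_bound_general r p hp_nonneg hp_sum γ hγ0 hγ1 π hπ_nonneg hπ_sum
    T hT Tstar hTstar vπ hvπ vstar hvstar ε δ V hpev hpim
end

section
/- The performance-difference identity underlying the policy gradient theorem: for any two vectors and differentiable parameterization, Σ_{s0} d^0(s0) v^{π_θ}(s0) has gradient ∇_θ Σ_{s0} d^0(s0) v^{π_θ}(s0) = Σ_s d^γ(s|π_θ) Σ_a ∇_θ π_θ(a|s) q^{π_θ}(s,a), where d^γ(s|π_θ) = Σ_{t=0}^∞ γ^t d^t(s|π_θ) is the discounted visiting frequency. -/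
/-! The value vector solves the linear system `(1 - γ P_θ) v_θ = b_θ`, where `P_θ` is the
state transition matrix of `π_θ`. This system is strictly diagonally dominant because `P_θ` is
row stochastic and `|γ| < 1`, so Cramer's rule makes `v_θ` differentiable in `θ`.
Differentiating the Bellman equation shows that `g = ∇v` solves a Bellman equation
`g = h + γ P_θ g` with reward `h(s) = ∑_a q(s,a) ∇π_θ(a|s)`. Pairing it with
`d^{t+1} = d^t P_θ` gives `⟨d^t, g⟩ = ⟨d^t, h⟩ + γ ⟨d^{t+1}, g⟩`, which telescopes to
`⟨d^0, g⟩ = ∑_t γ^t ⟨d^t, h⟩` because the `d^t` stay bounded in `ℓ¹`. -/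

open Matrix Finset

section LinearSystem

variable {𝕜 E n : Type*} [NontriviallyNormedField 𝕜] [NormedAddCommGroup E]
  [NormedSpace 𝕜 E] [Fintype n] [DecidableEq n] {F : E → Matrix n n 𝕜} {x : E}

theorem differentiableAt_det (hF : ∀ i j, DifferentiableAt 𝕜 (fun y => F y i j) x) :
    DifferentiableAt 𝕜 (fun y => (F y).det) x := by
  simp only [det_apply]
  exact DifferentiableAt.fun_sum fun σ _ =>
    (HasFDerivAt.finsetProd fun i _ => (hF (σ i) i).hasFDerivAt).differentiableAt.const_smul _

theorem differentiableAt_of_mulVec_eq {u b : E → n → 𝕜} (hu : ∀ y, F y *ᵥ u y = b y)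
    (hF : ∀ i j, DifferentiableAt 𝕜 (fun y => F y i j) x)
    (hb : ∀ i, DifferentiableAt 𝕜 (fun y => b y i) x) (hdet : (F x).det ≠ 0) (i : n) :
    DifferentiableAt 𝕜 (fun y => u y i) x := by
  have hcramer : ∀ y, (F y).det ≠ 0 →
      u y i = ((F y).det)⁻¹ * ((F y).updateCol i (b y)).det := by
    intro y hy
    rw [← cramer_apply, cramer_eq_adjugate_mulVec, ← hu, mulVec_mulVec, adjugate_mul,
      smul_mulVec, one_mulVec, Pi.smul_apply, smul_eq_mul, inv_mul_cancel_left₀ hy]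
  have hupdate : ∀ k j, DifferentiableAt 𝕜 (fun y => (F y).updateCol i (b y) k j) x := by
    intro k j
    simp only [updateCol_apply]
    split_ifs
    · exact hb k
    · exact hF k j
  have hdetF := differentiableAt_det hF
  refine ((hdetF.inv hdet).mul (differentiableAt_det hupdate)).congr_of_eventuallyEq ?_
  filter_upwards [hdetF.continuousAt.eventually_ne hdet] with y hy using hcramer y hy

end LinearSystem

section StochasticMatrix

variable {n : Type*} [Fintype n] [DecidableEq n]

theorem eq_vecMul_pow_of_succ {R : Type*} [Semiring R] {P : Matrix n n R} {d : ℕ → n → R}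
    (hd : ∀ t, d (t + 1) = d t ᵥ* P) (t : ℕ) : d t = d 0 ᵥ* P ^ t := by
  induction t with
  | zero => simp
  | succ t ih => rw [hd, ih, vecMul_vecMul, pow_succ]

theorem abs_vecMul_le_of_mem_rowStochastic {M : Matrix n n ℝ} (hM : M ∈ rowStochastic ℝ n)
    (x : n → ℝ) (j : n) : |(x ᵥ* M) j| ≤ ∑ i, |x i| :=
  calc |(x ᵥ* M) j| ≤ ∑ i, |x i * M i j| := abs_sum_le_sum_abs _ _
    _ ≤ ∑ i, |x i| := sum_le_sum fun i _ => by
      rw [abs_mul, abs_of_nonneg (nonneg_of_mem_rowStochastic hM)]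
      exact mul_le_of_le_one_right (abs_nonneg _) (le_one_of_mem_rowStochastic hM)

theorem det_one_sub_smul_ne_zero {P : Matrix n n ℝ} (hP : P ∈ rowStochastic ℝ n) {γ : ℝ}
    (hγ : |γ| < 1) : (1 - γ • P).det ≠ 0 := by
  refine det_ne_zero_of_sum_row_lt_diag fun k => ?_
  have hoff : ∑ j ∈ univ.erase k, ‖(1 - γ • P) k j‖ = |γ| * (1 - P k k) := by
    rw [← sum_row_of_mem_rowStochastic hP k, ← sum_erase_eq_sub (mem_univ k), mul_sum]
    refine sum_congr rfl fun j hj => ?_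
    rw [Matrix.sub_apply, one_apply_ne (ne_of_mem_erase hj).symm, Matrix.smul_apply,
      smul_eq_mul, zero_sub, norm_neg, Real.norm_eq_abs, abs_mul,
      abs_of_nonneg (nonneg_of_mem_rowStochastic hP)]
  have hdiag : 1 - |γ| * P k k ≤ ‖(1 - γ • P) k k‖ := by
    rw [Matrix.sub_apply, one_apply_eq, Matrix.smul_apply, smul_eq_mul, Real.norm_eq_abs]
    calc 1 - |γ| * P k k = |1| - |γ * P k k| := by
          rw [abs_one, abs_mul, abs_of_nonneg (nonneg_of_mem_rowStochastic hP)]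
      _ ≤ |1 - γ * P k k| := abs_sub_abs_le_abs_sub _ _
  rw [hoff]
  linarith

end StochasticMatrix

theorem sum_smul_sum_smul_eq_sum_vecMul_smul {n E : Type*} [Fintype n] [AddCommMonoid E]
    [Module ℝ E] (x : n → ℝ) (M : Matrix n n ℝ) (G : n → E) :
    ∑ i, x i • ∑ j, M i j • G j = ∑ j, (x ᵥ* M) j • G j := by
  simp only [smul_sum, smul_smul, vecMul, dotProduct, sum_smul]
  exact sum_comm

section Discounted

variable {E : Type*} [NormedAddCommGroup E] [NormedSpace ℝ E] [CompleteSpace E] {γ : ℝ}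

theorem summable_pow_smul_of_norm_le (hγ : |γ| < 1) {B : ℕ → E} {C : ℝ}
    (hB : ∀ t, ‖B t‖ ≤ C) : Summable fun t => γ ^ t • B t := by
  refine .of_norm_bounded ((summable_geometric_of_lt_one (abs_nonneg γ) hγ).mul_right C)
    fun t => ?_
  rw [norm_smul, norm_pow, Real.norm_eq_abs]
  exact mul_le_mul_of_nonneg_left (hB t) (pow_nonneg (abs_nonneg γ) t)

theorem hasSum_pow_smul_of_eq_add_smul_succ (hγ : |γ| < 1) {A B : ℕ → E} {C : ℝ}
    (hB : ∀ t, ‖B t‖ ≤ C) (hAB : ∀ t, B t = A t + γ • B (t + 1)) :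
    HasSum (fun t => γ ^ t • A t) (B 0) := by
  obtain ⟨X, hX⟩ := summable_pow_smul_of_norm_le hγ hB
  have hshift : HasSum (fun t => γ ^ (t + 1) • B (t + 1)) (X - B 0) := by
    simpa using (hasSum_nat_add_iff' 1).2 hX
  convert hX.sub hshift using 1
  · funext t
    rw [hAB t, smul_add, smul_smul, pow_succ]
    abel
  · abel

theorem sum_smul_eq_sum_tsum_pow_mul_smul {n : Type*} [Fintype n] [DecidableEq n]
    {P : Matrix n n ℝ} (hP : P ∈ rowStochastic ℝ n) (hγ : |γ| < 1) {d : ℕ → n → ℝ}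
    (hd : ∀ t, d (t + 1) = d t ᵥ* P) {G H : n → E}
    (hGH : ∀ i, G i = H i + γ • ∑ j, P i j • G j) :
    ∑ i, d 0 i • G i = ∑ i, (∑' t, γ ^ t * d t i) • H i := by
  have hd_le : ∀ t i, ‖d t i‖ ≤ ∑ j, |d 0 j| := fun t i => by
    rw [eq_vecMul_pow_of_succ hd t, Real.norm_eq_abs]
    exact abs_vecMul_le_of_mem_rowStochastic (pow_mem hP t) _ _
  have hG_le : ∀ t, ‖∑ i, d t i • G i‖ ≤ ∑ i, (∑ j, |d 0 j|) * ‖G i‖ := fun t =>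
    (norm_sum_le _ _).trans <| sum_le_sum fun i _ => by
      rw [norm_smul]
      exact mul_le_mul_of_nonneg_right (hd_le t i) (norm_nonneg _)
  have hstep : ∀ t, ∑ i, d t i • G i = ∑ i, d t i • H i + γ • ∑ i, d (t + 1) i • G i := by
    intro t
    conv_lhs => rw [funext hGH]
    simp only [smul_add, sum_add_distrib, smul_comm (d t _) γ, ← smul_sum,
      sum_smul_sum_smul_eq_sum_vecMul_smul, hd]
  have hterm : ∀ i, HasSum (fun t => (γ ^ t * d t i) • H i) ((∑' t, γ ^ t * d t i) • H i) :=
    fun i => (summable_pow_smul_of_norm_le hγ (hd_le · i)).hasSum.smul_const (H i)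
  refine (hasSum_pow_smul_of_eq_add_smul_succ hγ hG_le hstep).unique ?_
  convert hasSum_sum fun i _ => hterm i using 2 with t
  simp only [smul_sum, mul_smul]

end Discounted

section MarkovDecisionProcess

variable {S A : Type*} [Fintype S] [Fintype A]

def transitionMatrix (π : S → A → ℝ) (p : S → A → S → ℝ) : Matrix S S ℝ :=
  of fun s s' => ∑ a, π s a * p s a s'

def expectedReward (π : S → A → ℝ) (p r : S → A → S → ℝ) (s : S) : ℝ :=
  ∑ a, π s a * ∑ s', p s a s' * r s a s'

theorem transitionMatrix_mem_rowStochastic [DecidableEq S] {π : S → A → ℝ}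
    {p : S → A → S → ℝ} (hπ_nonneg : ∀ s a, 0 ≤ π s a) (hπ_sum : ∀ s, ∑ a, π s a = 1)
    (hp_nonneg : ∀ s a s', 0 ≤ p s a s') (hp_sum : ∀ s a, ∑ s', p s a s' = 1) :
    transitionMatrix π p ∈ rowStochastic ℝ S := by
  refine mem_rowStochastic_iff_sum.2 ⟨fun s s' =>
    sum_nonneg fun a _ => mul_nonneg (hπ_nonneg s a) (hp_nonneg s a s'), fun s => ?_⟩
  simp only [transitionMatrix, of_apply]
  rw [sum_comm]
  simp only [← mul_sum, hp_sum, mul_one, hπ_sum]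

theorem one_sub_smul_transitionMatrix_mulVec [DecidableEq S] {γ : ℝ} {π : S → A → ℝ}
    {p r : S → A → S → ℝ} {v : S → ℝ}
    (hv : ∀ s, v s = ∑ a, π s a * ∑ s', p s a s' * (r s a s' + γ * v s')) :
    (1 - γ • transitionMatrix π p) *ᵥ v = expectedReward π p r := by
  funext s
  rw [sub_mulVec, one_mulVec, smul_mulVec, Pi.sub_apply, Pi.smul_apply, smul_eq_mul,
    sub_eq_iff_eq_add, hv s]
  simp only [expectedReward, transitionMatrix, mulVec, dotProduct, of_apply, mul_add,
    sum_add_distrib, mul_sum, sum_mul]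
  rw [sum_comm (γ := S)]
  congr 1
  exact sum_congr rfl fun s' _ => sum_congr rfl fun a _ => by ring

variable {m : ℕ} {γ : ℝ} {p r : S → A → S → ℝ} {π : (Fin m → ℝ) → S → A → ℝ}
  {v : (Fin m → ℝ) → S → ℝ} {θ : Fin m → ℝ}

theorem differentiableAt_value (hγ : |γ| < 1) (hp_nonneg : ∀ s a s', 0 ≤ p s a s')
    (hp_sum : ∀ s a, ∑ s', p s a s' = 1) (hπ_nonneg : ∀ s a, 0 ≤ π θ s a)
    (hπ_sum : ∀ s, ∑ a, π θ s a = 1)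
    (hv : ∀ θ s, v θ s = ∑ a, π θ s a * ∑ s', p s a s' * (r s a s' + γ * v θ s'))
    (hπ_diff : ∀ s a, DifferentiableAt ℝ (fun θ' => π θ' s a) θ) (s : S) :
    DifferentiableAt ℝ (fun θ' => v θ' s) θ := by
  classical
  have hP := transitionMatrix_mem_rowStochastic hπ_nonneg hπ_sum hp_nonneg hp_sum
  refine differentiableAt_of_mulVec_eq (fun θ' => one_sub_smul_transitionMatrix_mulVec (hv θ'))
    (fun i j => ?_) (fun i => ?_) (det_one_sub_smul_ne_zero hP hγ) s
  · simp only [Matrix.sub_apply, Matrix.smul_apply, transitionMatrix, of_apply, smul_eq_mul]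
    exact (differentiableAt_const _).sub (by fun_prop)
  · simp only [expectedReward]
    fun_prop

theorem fderiv_value_eq
    (hv : ∀ θ s, v θ s = ∑ a, π θ s a * ∑ s', p s a s' * (r s a s' + γ * v θ s'))
    (hπ_diff : ∀ s a, DifferentiableAt ℝ (fun θ' => π θ' s a) θ)
    (hv_diff : ∀ s, DifferentiableAt ℝ (fun θ' => v θ' s) θ) (s : S) :
    fderiv ℝ (fun θ' => v θ' s) θ =
      ∑ a, (∑ s', p s a s' * (r s a s' + γ * v θ s')) • fderiv ℝ (fun θ' => π θ' s a) θ +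
        γ • ∑ s', transitionMatrix (π θ) p s s' • fderiv ℝ (fun θ' => v θ' s') θ := by
  have hq : ∀ a, HasFDerivAt (fun θ' => ∑ s', p s a s' * (r s a s' + γ * v θ' s'))
      (∑ s', p s a s' • γ • fderiv ℝ (fun θ' => v θ' s') θ) θ := fun a =>
    .fun_sum fun s' _ => (((hv_diff s').hasFDerivAt.const_mul γ).const_add _).const_mul _
  have hbellman := HasFDerivAt.fun_sum fun a (_ : a ∈ univ) =>
    (hπ_diff s a).hasFDerivAt.fun_mul (hq a)
  rw [← funext fun θ' => hv θ' s] at hbellman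
  rw [hbellman.fderiv, sum_add_distrib, add_comm]
  congr 1
  simp only [transitionMatrix, of_apply, smul_sum, smul_smul, sum_smul]
  rw [sum_comm]
  exact sum_congr rfl fun s' _ => sum_congr rfl fun a _ => by ring_nf

end MarkovDecisionProcess

theorem policy_gradient_theorem_general
    {S A : Type*} [Fintype S] [Fintype A] {m : ℕ}
    (γ : ℝ) (hγ0 : 0 ≤ γ) (hγ1 : γ < 1)
    (p : S → A → S → ℝ) (hp_nonneg : ∀ s a s', 0 ≤ p s a s')
    (hp_sum : ∀ s a, ∑ s', p s a s' = 1)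
    (r : S → A → S → ℝ) (d0 : S → ℝ)
    (π : (Fin m → ℝ) → S → A → ℝ)
    (hπ_nonneg : ∀ θ s a, 0 ≤ π θ s a) (hπ_sum : ∀ θ s, ∑ a, π θ s a = 1)
    (v : (Fin m → ℝ) → S → ℝ)
    (hv : ∀ θ s, v θ s = ∑ a, π θ s a * ∑ s', p s a s' * (r s a s' + γ * v θ s'))
    (dt : (Fin m → ℝ) → ℕ → S → ℝ)
    (hdt0 : ∀ θ, dt θ 0 = d0)
    (hdt_succ : ∀ θ t s', dt θ (t + 1) s' = ∑ s, dt θ t s * ∑ a, π θ s a * p s a s')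
    (θ : Fin m → ℝ)
    (hπ_diff : ∀ s a, DifferentiableAt ℝ (fun θ' => π θ' s a) θ) :
    fderiv ℝ (fun θ' => ∑ s0, d0 s0 * v θ' s0) θ =
      ∑ s, ∑ a,
        ((∑' t : ℕ, γ ^ t * dt θ t s) *
            (∑ s', p s a s' * (r s a s' + γ * v θ s'))) •
          fderiv ℝ (fun θ' => π θ' s a) θ := by
  classical
  have hγ : |γ| < 1 := abs_lt.2 ⟨by linarith, hγ1⟩
  have hP := transitionMatrix_mem_rowStochastic (hπ_nonneg θ) (hπ_sum θ) hp_nonneg hp_sum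
  have hv_diff := differentiableAt_value hγ hp_nonneg hp_sum (hπ_nonneg θ) (hπ_sum θ) hv hπ_diff
  have hJ := HasFDerivAt.fun_sum fun s0 (_ : s0 ∈ univ) =>
    (hv_diff s0).hasFDerivAt.const_mul (d0 s0)
  rw [hJ.fderiv, ← hdt0 θ, sum_smul_eq_sum_tsum_pow_mul_smul hP hγ
    (fun t => funext (hdt_succ θ t)) (fderiv_value_eq hv hπ_diff hv_diff)]
  simp only [smul_sum, smul_smul]

/-- Policy gradient theorem. For a differentiable policy parameterization
`π_θ`, the objective `J(θ) = ∑_{s0} d^0(s0) v^{π_θ}(s0)` has gradient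
`∇_θ J(θ) = ∑_s d^γ(s|π_θ) ∑_a ∇_θ π_θ(a|s) q^{π_θ}(s,a)`, where
`d^γ(s|π_θ) = ∑'_{t} γ^t d^t(s|π_θ)` is the discounted visiting frequency,
`v^{π_θ}` is the fixed point of `T_{π_θ}` and
`q^{π_θ}(s,a) = ∑_{s'} p(s'|s,a)[r(s,a,s') + γ v^{π_θ}(s')]`. -/
theorem policy_gradient_theorem
    {S A : Type*} [Fintype S] [Fintype A] {m : ℕ}
    (γ : ℝ) (hγ0 : 0 ≤ γ) (hγ1 : γ < 1)
    (p : S → A → S → ℝ) (hp_nonneg : ∀ s a s', 0 ≤ p s a s')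
    (hp_sum : ∀ s a, ∑ s', p s a s' = 1)
    (r : S → A → S → ℝ) (d0 : S → ℝ) (hd0_nonneg : ∀ s, 0 ≤ d0 s)
    (hd0_sum : ∑ s, d0 s = 1)
    (π : (Fin m → ℝ) → S → A → ℝ)
    (hπ_nonneg : ∀ θ s a, 0 ≤ π θ s a) (hπ_sum : ∀ θ s, ∑ a, π θ s a = 1)
    (v : (Fin m → ℝ) → S → ℝ)
    (hv : ∀ θ s, v θ s = ∑ a, π θ s a * ∑ s', p s a s' * (r s a s' + γ * v θ s'))
    (dt : (Fin m → ℝ) → ℕ → S → ℝ)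
    (hdt0 : ∀ θ, dt θ 0 = d0)
    (hdt_succ : ∀ θ t s', dt θ (t + 1) s' = ∑ s, dt θ t s * ∑ a, π θ s a * p s a s')
    (θ : Fin m → ℝ)
    (hπ_diff : ∀ s a, DifferentiableAt ℝ (fun θ' => π θ' s a) θ) :
    fderiv ℝ (fun θ' => ∑ s0, d0 s0 * v θ' s0) θ =
      ∑ s, ∑ a,
        ((∑' t : ℕ, γ ^ t * dt θ t s) *
            (∑ s', p s a s' * (r s a s' + γ * v θ s'))) •
          fderiv ℝ (fun θ' => π θ' s a) θ :=
  policy_gradient_theorem_general γ hγ0 hγ1 p hp_nonneg hp_sum r d0 π hπ_nonneg hπ_sum v hv dt hdt0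
    hdt_succ θ hπ_diff
end
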